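/- arXiv:2604.06430 — 4 statements merged into one kernel-verified Lean document; each statement's English description precedes it below -/
import Mathlib

section
/- Asynchrony gap bound: Suppose F is L_e-Lipschitz in the evaluation time (for any fixed schedule D, |F(τ;D) − F(τ';D)| ≤ L_e|τ − τ'|) and L_d-Lipschitz in each single deployment time (if D and D' differ only in the deployment time of one action, changing τ_j to τ_j', then |F(τ;D) − F(τ;D')| ≤ L_d|τ_j − τ_j'| for all τ). Let n agents execute actions a_1,…,a_n at times τ_1 ≤ … ≤ τ_n, with |τ_i − τ_j| ≤ ρ for all i,j, and let τ̄ = max_i τ_i. Then the difference between the asynchronous reward ∑_{k=1}^n [F(τ_k; D_k) − F(τ_k; D_{k−1})] (with D_k = {(a_j,τ_j)}_{j≤k}, D_0 = ∅) and the synchronous reward ∑_{k=1}^n [F(τ̄; D̄_k) − F(τ̄; D̄_{k−1})] (with D̄_k = {(a_j,τ̄)}_{j≤k}) is bounded in absolute value by (2 L_e n + L_d n²) ρ. -/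
/-- Asynchrony gap bound: under evaluation-time and
single-deployment-time Lipschitzness of the time-stamped reward function `F`,
and a uniform timing mismatch `ρ`, the difference between the asynchronous
reward and the synchronous reward (all actions deployed at `τbar = max τ_i`)
is at most `(2 L_e n + L_d n²) ρ`. Schedules are modeled as lists of
(action, deployment-time) pairs. -/
theorem asynchrony_gap_bound
    {V : Type*}
    (F : ℝ → List (V × ℝ) → ℝ) (L_e L_d ρ : ℝ)
    (hLe_pos : 0 < L_e) (hLd_pos : 0 < L_d) (hρ : 0 ≤ ρ)
    (hF0 : ∀ τ : ℝ, F τ ([] : List (V × ℝ)) = 0)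
    (hFnn : ∀ (τ : ℝ) (l : List (V × ℝ)), 0 ≤ F τ l)
    -- evaluation-time Lipschitzness
    (hLe : ∀ (τ τ' : ℝ) (l : List (V × ℝ)), |F τ l - F τ' l| ≤ L_e * |τ - τ'|)
    -- single-deployment-time Lipschitzness
    (hLd : ∀ (τ : ℝ) (l₁ l₂ : List (V × ℝ)) (x : V) (t t' : ℝ),
      |F τ (l₁ ++ (x, t) :: l₂) - F τ (l₁ ++ (x, t') :: l₂)| ≤ L_d * |t - t'|)
    (n : ℕ) (a : ℕ → V) (τ : ℕ → ℝ) (τbar : ℝ)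
    -- agents ordered by execution time
    (hord : ∀ i j, i ≤ j → j < n → τ i ≤ τ j)
    -- timing mismatch bound
    (hmismatch : ∀ i < n, ∀ j < n, |τ i - τ j| ≤ ρ)
    -- τbar is the max of the execution times
    (hτbar_le : ∀ i < n, τ i ≤ τbar)
    (hτbar_mem : ∃ i < n, τ i = τbar)
    (D Dbar : ℕ → List (V × ℝ))
    (hD : ∀ k, D k = (List.range k).map (fun j => (a j, τ j)))
    (hDbar : ∀ k, Dbar k = (List.range k).map (fun j => (a j, τbar))) :
    |(∑ k ∈ Finset.range n, (F (τ k) (D (k + 1)) - F (τ k) (D k)))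
      - (∑ k ∈ Finset.range n, (F τbar (Dbar (k + 1)) - F τbar (Dbar k)))|
      ≤ (2 * L_e * n + L_d * n ^ 2) * ρ := by
  obtain ⟨i, hi, hτi⟩ := hτbar_mem
  have hmis : ∀ j < n, |τ j - τbar| ≤ ρ := by
    intro j hj; rw [← hτi]; exact hmismatch j hj i hi
  -- key hybrid lemma
  have key : ∀ k, k ≤ n → ∀ (τ' : ℝ) (l₂ : List (V × ℝ)),
      |F τ' ((List.range k).map (fun j => (a j, τ j)) ++ l₂) -
       F τ' ((List.range k).map (fun j => (a j, τbar)) ++ l₂)| ≤ L_d * k * ρ := by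
    intro k
    induction k with
    | zero => intro _ τ' l₂; simp
    | succ k ih =>
      intro hk τ' l₂
      have hkn : k < n := hk
      have hA : ∀ t : ℝ, (List.range (k+1)).map (fun j => (a j, t)) ++ l₂ =
          (List.range k).map (fun j => (a j, t)) ++ ((a k, t) :: l₂) := by
        intro t
        rw [List.range_succ, List.map_append, List.append_assoc]
        simp
      have hA' : (List.range (k+1)).map (fun j => (a j, τ j)) ++ l₂ =
          (List.range k).map (fun j => (a j, τ j)) ++ ((a k, τ k) :: l₂) := by
        rw [List.range_succ, List.map_append, List.append_assoc]
        simp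
      rw [hA', hA]
      set A := (List.range k).map (fun j => (a j, τ j))
      set B := (List.range k).map (fun j => (a j, τbar))
      have h1 : |F τ' (A ++ (a k, τ k) :: l₂) - F τ' (A ++ (a k, τbar) :: l₂)|
          ≤ L_d * ρ := by
        calc |F τ' (A ++ (a k, τ k) :: l₂) - F τ' (A ++ (a k, τbar) :: l₂)|
            ≤ L_d * |τ k - τbar| := hLd τ' A l₂ (a k) (τ k) τbar
          _ ≤ L_d * ρ := by
              exact mul_le_mul_of_nonneg_left (hmis k hkn) (le_of_lt hLd_pos)
      have h2 := ih (le_of_lt hkn) τ' ((a k, τbar) :: l₂)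
      calc |F τ' (A ++ (a k, τ k) :: l₂) - F τ' (B ++ (a k, τbar) :: l₂)|
          ≤ |F τ' (A ++ (a k, τ k) :: l₂) - F τ' (A ++ (a k, τbar) :: l₂)|
            + |F τ' (A ++ (a k, τbar) :: l₂) - F τ' (B ++ (a k, τbar) :: l₂)| := by
              have := abs_sub_abs_le_abs_sub (F τ' (A ++ (a k, τ k) :: l₂)) (F τ' (B ++ (a k, τbar) :: l₂))
              exact abs_sub_le _ _ _
        _ ≤ L_d * ρ + L_d * k * ρ := add_le_add h1 h2
        _ = L_d * (k+1 : ℕ) * ρ := by push_cast; ring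
  -- termwise bound
  have hterm : ∀ k < n,
      |(F (τ k) (D (k + 1)) - F (τ k) (D k))
        - (F τbar (Dbar (k + 1)) - F τbar (Dbar k))|
      ≤ 2 * L_e * ρ + L_d * (2 * (k:ℝ) + 1) * ρ := by
    intro k hk
    have e1 : |F (τ k) (D (k+1)) - F τbar (D (k+1))| ≤ L_e * ρ := by
      calc |F (τ k) (D (k+1)) - F τbar (D (k+1))| ≤ L_e * |τ k - τbar| := hLe _ _ _
        _ ≤ L_e * ρ := mul_le_mul_of_nonneg_left (hmis k hk) (le_of_lt hLe_pos)
    have e2 : |F (τ k) (D k) - F τbar (D k)| ≤ L_e * ρ := by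
      calc |F (τ k) (D k) - F τbar (D k)| ≤ L_e * |τ k - τbar| := hLe _ _ _
        _ ≤ L_e * ρ := mul_le_mul_of_nonneg_left (hmis k hk) (le_of_lt hLe_pos)
    have d1 : |F τbar (D (k+1)) - F τbar (Dbar (k+1))| ≤ L_d * (k+1 : ℕ) * ρ := by
      have := key (k+1) hk τbar []
      simpa [hD, hDbar] using this
    have d2 : |F τbar (D k) - F τbar (Dbar k)| ≤ L_d * k * ρ := by
      have := key k (le_of_lt hk) τbar []
      simpa [hD, hDbar] using this
    have decomp : (F (τ k) (D (k + 1)) - F (τ k) (D k))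
        - (F τbar (Dbar (k + 1)) - F τbar (Dbar k))
        = (F (τ k) (D (k+1)) - F τbar (D (k+1)))
          + (F τbar (D (k+1)) - F τbar (Dbar (k+1)))
          + (-(F (τ k) (D k) - F τbar (D k)))
          + (-(F τbar (D k) - F τbar (Dbar k))) := by ring
    rw [decomp]
    have h4 : ∀ w x y z : ℝ, |w + x + y + z| ≤ |w| + |x| + |y| + |z| := by
      intro w x y z
      calc |w + x + y + z| ≤ |w + x + y| + |z| := abs_add_le _ _
        _ ≤ (|w + x| + |y|) + |z| := by linarith [abs_add_le (w+x) y]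
        _ ≤ ((|w| + |x|) + |y|) + |z| := by linarith [abs_add_le w x]
    calc _ ≤ _ := h4 _ _ _ _
      _ ≤ L_e * ρ + L_d * (k+1 : ℕ) * ρ + L_e * ρ + L_d * k * ρ := by
          rw [abs_neg, abs_neg]; exact add_le_add (add_le_add (add_le_add e1 d1) e2) d2
      _ = 2 * L_e * ρ + L_d * (2 * (k:ℝ) + 1) * ρ := by push_cast; ring
  -- combine
  have hsum' : ∀ m : ℕ, ∑ k ∈ Finset.range m, (2 * (k:ℝ) + 1) = (m:ℝ)^2 := by
    intro m
    induction m with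
    | zero => simp
    | succ m ih => rw [Finset.sum_range_succ, ih]; push_cast; ring
  have hsum := hsum' n
  rw [← Finset.sum_sub_distrib]
  calc |∑ k ∈ Finset.range n, ((F (τ k) (D (k + 1)) - F (τ k) (D k))
          - (F τbar (Dbar (k + 1)) - F τbar (Dbar k)))|
      ≤ ∑ k ∈ Finset.range n, |(F (τ k) (D (k + 1)) - F (τ k) (D k))
          - (F τbar (Dbar (k + 1)) - F τbar (Dbar k))| := Finset.abs_sum_le_sum_abs _ _
    _ ≤ ∑ k ∈ Finset.range n, (2 * L_e * ρ + L_d * (2 * (k:ℝ) + 1) * ρ) := by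
        apply Finset.sum_le_sum
        intro k hk
        exact hterm k (Finset.mem_range.mp hk)
    _ = (2 * L_e * n + L_d * n ^ 2) * ρ := by
        rw [Finset.sum_add_distrib, Finset.sum_const, Finset.card_range]
        have : ∑ k ∈ Finset.range n, L_d * (2 * (k:ℝ) + 1) * ρ
            = L_d * ρ * ∑ k ∈ Finset.range n, (2 * (k:ℝ) + 1) := by
          rw [Finset.mul_sum]; apply Finset.sum_congr rfl; intro k _; ring
        rw [this, hsum]; push_cast; ring
end

section
/- The softmax map σ : ℝ^n → ℝ^n, defined by σ(x)_i = exp(x_i) / ∑_j exp(x_j), is 1/2-Lipschitz from the ℓ¹ norm to the ℓ¹ norm: for all x, y ∈ ℝ^n, ‖σ(x) − σ(y)‖₁ ≤ (1/2)‖x − y‖₁. -/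
/-!
Along the segment `t ↦ y + t u`, `u = x - y`, the derivative of softmax is `J u` with
`J = diag p - p pᵀ`, `p` the softmax vector, i.e. `(J u)_i = p_i (u_i - ⟨p, u⟩)`. Splitting
`u_i - ⟨p, u⟩ = (1 - p_i) u_i - ∑_{j ≠ i} p_j u_j` gives
`‖J u‖₁ ≤ ∑_i 2 p_i (1 - p_i) |u_i| ≤ ½ ‖u‖₁`. The `ℓ¹` mean value inequality for a curve
`f` reduces to the scalar one for `t ↦ ∑_i s_i f_i(t)`, where `s_i` is the sign of `f_i(b) - f_i(a)`.
-/

open Finset Real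

section WeightedMean

variable {ι : Type*} [Fintype ι] {p : ι → ℝ}

theorem abs_sub_sum_mul_le [DecidableEq ι] (hp : ∀ i, 0 ≤ p i) (hp1 : ∑ i, p i = 1)
    (u : ι → ℝ) (i : ι) :
    |u i - ∑ j, p j * u j| ≤ (1 - 2 * p i) * |u i| + ∑ j, p j * |u j| := by
  have hpi : p i ≤ 1 := hp1 ▸ single_le_sum (fun j _ => hp j) (mem_univ i)
  set r := ∑ j ∈ univ.erase i, p j * u j
  have hr : |r| ≤ ∑ j ∈ univ.erase i, p j * |u j| :=
    (abs_sum_le_sum_abs _ _).trans_eq <|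
      sum_congr rfl fun j _ => by rw [abs_mul, abs_of_nonneg (hp j)]
  rw [← add_sum_erase _ _ (mem_univ i), ← add_sum_erase _ (fun j => p j * |u j|) (mem_univ i)]
  calc |u i - (p i * u i + r)| = |(1 - p i) * u i - r| := by congr 1; ring
    _ ≤ |(1 - p i) * u i| + |r| := abs_sub _ _
    _ = (1 - p i) * |u i| + |r| := by rw [abs_mul, abs_of_nonneg (sub_nonneg.2 hpi)]
    _ ≤ (1 - 2 * p i) * |u i| + (p i * |u i| + ∑ j ∈ univ.erase i, p j * |u j|) := by linarith

theorem sum_mul_abs_sub_sum_mul_le (hp : ∀ i, 0 ≤ p i) (hp1 : ∑ i, p i = 1) (u : ι → ℝ) :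
    ∑ i, p i * |u i - ∑ j, p j * u j| ≤ 1 / 2 * ∑ i, |u i| := by
  classical
  calc ∑ i, p i * |u i - ∑ j, p j * u j|
      ≤ ∑ i, p i * ((1 - 2 * p i) * |u i| + ∑ j, p j * |u j|) :=
        sum_le_sum fun i _ => mul_le_mul_of_nonneg_left (abs_sub_sum_mul_le hp hp1 u i) (hp i)
    _ = ∑ i, p i * ((1 - 2 * p i) * |u i|) + ∑ i, p i * |u i| := by
        simp only [mul_add, sum_add_distrib, ← sum_mul, hp1, one_mul]
    _ = ∑ i, 2 * p i * (1 - p i) * |u i| := by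
        rw [← sum_add_distrib]
        exact sum_congr rfl fun i _ => by ring
    _ ≤ ∑ i, 1 / 2 * |u i| :=
        sum_le_sum fun i _ => mul_le_mul_of_nonneg_right
          (by nlinarith [sq_nonneg (2 * p i - 1)]) (abs_nonneg _)
    _ = 1 / 2 * ∑ i, |u i| := (mul_sum _ _ _).symm

end WeightedMean

theorem sum_abs_sub_le_of_hasDerivAt {ι : Type*} [Fintype ι] {f f' : ι → ℝ → ℝ} {C : ℝ}
    (hf : ∀ i t, HasDerivAt (f i) (f' i t) t) (hf' : ∀ t, ∑ i, |f' i t| ≤ C)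
    {a b : ℝ} (hab : a ≤ b) :
    ∑ i, |f i b - f i a| ≤ C * (b - a) := by
  set s : ι → ℝ := fun i => SignType.sign (f i b - f i a)
  have hs : ∀ (σ : SignType) (v : ℝ), σ * v ≤ |v| := by
    rintro (_ | _ | _) v <;> simp [le_abs_self, neg_le_abs]
  have hφ : ∀ t, HasDerivAt (fun t => ∑ i, s i * f i t) (∑ i, s i * f' i t) t :=
    fun t => HasDerivAt.fun_sum fun i _ => (hf i t).const_mul (s i)
  calc ∑ i, |f i b - f i a| = ∑ i, s i * f i b - ∑ i, s i * f i a := by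
        simp only [s, ← sum_sub_distrib, ← mul_sub, sign_mul_self]
    _ ≤ C * (b - a) :=
        image_sub_le_mul_sub_of_deriv_le (fun t => (hφ t).differentiableAt)
          (fun t => (hφ t).deriv ▸ (sum_le_sum fun i _ => hs _ _).trans (hf' t)) hab

section Softmax

variable {ι : Type*} [Fintype ι]

noncomputable def softmax (x : ι → ℝ) (i : ι) : ℝ := exp (x i) / ∑ j, exp (x j)

theorem softmax_nonneg (x : ι → ℝ) (i : ι) : 0 ≤ softmax x i := by
  unfold softmax; positivity

theorem sum_softmax [Nonempty ι] (x : ι → ℝ) : ∑ i, softmax x i = 1 := by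
  simp only [softmax, ← sum_div]
  rw [div_self]
  exact (sum_pos (fun j _ => exp_pos (x j)) univ_nonempty).ne'

theorem hasDerivAt_softmax {c : ℝ → ι → ℝ} {c' : ι → ℝ} {t : ℝ}
    (hc : ∀ j, HasDerivAt (c · j) (c' j) t) (i : ι) :
    HasDerivAt (fun s => softmax (c s) i)
      (softmax (c t) i * (c' i - ∑ j, softmax (c t) j * c' j)) t := by
  have hS : 0 < ∑ j, exp (c t j) := sum_pos (fun j _ => exp_pos _) ⟨i, mem_univ i⟩
  refine ((hc i).exp.div (HasDerivAt.fun_sum fun j _ => (hc j).exp) hS.ne').congr_deriv ?_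
  simp only [softmax, div_mul_eq_mul_div, ← sum_div]
  field_simp

theorem sum_abs_softmax_mul_sub_le (x u : ι → ℝ) :
    ∑ i, |softmax x i * (u i - ∑ j, softmax x j * u j)| ≤ 1 / 2 * ∑ i, |u i| := by
  cases isEmpty_or_nonempty ι
  · simp
  simp only [abs_mul, abs_of_nonneg (softmax_nonneg x _)]
  exact sum_mul_abs_sub_sum_mul_le (softmax_nonneg x) (sum_softmax x) u

end Softmax

/-- The softmax map is `1/2`-Lipschitz from the ℓ¹ norm to the
ℓ¹ norm. -/
theorem softmax_half_lipschitz_l1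
    (n : ℕ) (x y : Fin n → ℝ) :
    ∑ i, |Real.exp (x i) / (∑ j, Real.exp (x j))
          - Real.exp (y i) / (∑ j, Real.exp (y j))|
      ≤ (1 / 2) * ∑ i, |x i - y i| := by
  set u := x - y
  have hline : ∀ t j, HasDerivAt (fun s => y j + s * u j) (u j) t := fun t j => by
    simpa using ((hasDerivAt_id t).mul_const (u j)).const_add (y j)
  have h := sum_abs_sub_le_of_hasDerivAt (f := fun i s => softmax (fun j => y j + s * u j) i)
    (fun i t => hasDerivAt_softmax (hline t) i)
    (fun t => sum_abs_softmax_mul_sub_le _ u) zero_le_one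
  simpa [softmax, u] using h
end

section
/- Centralized offline sequential-greedy-style bound with curvature: Let f : 2^V → ℝ be a normalized, monotone, submodular set function with curvature κ_f ∈ [0,1]. Let A = {a_1, …, a_n} be the selected actions (one per agent, indexed 1,…,n) and let A* be any set of n actions (one per agent). Suppose each selected action is a best response to the full set of others' actions: f(a_i | A ∖ {a_i}) ≥ f(a*_i | A ∖ {a_i}) for each i (where a*_i is agent i's action in A*). Then f(A*) ≤ (1 + κ_f) f(A). -/
lemma telescope_union {V : Type*} [DecidableEq V] (f : Finset V → ℝ)
    (B : Finset V) (h : ℕ → V) (n : ℕ) :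
    f (B ∪ (Finset.range n).image h)
      = f B + ∑ j ∈ Finset.range n,
          (f (insert (h j) (B ∪ (Finset.range j).image h))
            - f (B ∪ (Finset.range j).image h)) := by
  induction n with
  | zero => simp
  | succ k ih =>
      rw [Finset.sum_range_succ, Finset.range_add_one, Finset.image_insert,
        Finset.union_insert, ih]
      ring

/-- Centralized offline sequential-greedy-style bound with
curvature: if each selected action `a_i` is a best response to the full set
of the other selected actions, then for any comparison set `A*` (one action
per agent, all actions across `A` and `A*` distinct),
`f(A*) ≤ (1 + κ_f) f(A)`. -/
theorem centralized_best_response_bound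
    {V : Type*} [Fintype V] [Nonempty V] [DecidableEq V]
    (f : Finset V → ℝ)
    (hnorm : f ∅ = 0)
    (hmono : ∀ {A B : Finset V}, A ⊆ B → f A ≤ f B)
    (hsub : ∀ {A B : Finset V} (s : V), A ⊆ B →
      f (insert s B) - f B ≤ f (insert s A) - f A)
    (hpos : ∀ v : V, 0 < f {v})
    (κ : ℝ)
    (hκ : κ = 1 - Finset.univ.inf' Finset.univ_nonempty
      (fun v : V => (f Finset.univ - f (Finset.univ.erase v)) / f {v}))
    (n : ℕ) (a astar : Fin n → V)
    -- all actions across A and A* are distinct elements of V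
    (hdistinct : Function.Injective (Sum.elim a astar))
    -- each selected action is a best response to the other selected actions
    (hbr : ∀ i : Fin n,
      f (insert (astar i) ((Finset.univ.image a).erase (a i)))
          - f ((Finset.univ.image a).erase (a i))
        ≤ f (insert (a i) ((Finset.univ.image a).erase (a i)))
          - f ((Finset.univ.image a).erase (a i))) :
    f (Finset.univ.image astar) ≤ (1 + κ) * f (Finset.univ.image a) := by
  classical
  obtain ⟨v0⟩ := (inferInstance : Nonempty V)
  set α : ℕ → V := fun j => if h : j < n then a ⟨j, h⟩ else v0 with hαdef
  set β : ℕ → V := fun j => if h : j < n then astar ⟨j, h⟩ else v0 with hβdef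
  have ha_inj : Function.Injective a := fun i j h => by
    have := hdistinct (a₁ := Sum.inl i) (a₂ := Sum.inl j) (by simpa using h)
    simpa using this
  have hastar_inj : Function.Injective astar := fun i j h => by
    have := hdistinct (a₁ := Sum.inr i) (a₂ := Sum.inr j) (by simpa using h)
    simpa using this
  have hne : ∀ i j : Fin n, a i ≠ astar j := fun i j h => by
    have := hdistinct (a₁ := Sum.inl i) (a₂ := Sum.inr j) (by simpa using h)
    simp at this
  set A : Finset V := Finset.univ.image a with hA
  set As : Finset V := Finset.univ.image astar with hAs
  have hAimg : A = (Finset.range n).image α := by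
    ext v
    simp only [hA, Finset.mem_image, Finset.mem_univ, true_and, Finset.mem_range]
    constructor
    · rintro ⟨i, rfl⟩; exact ⟨i, i.isLt, by simp [hαdef, i.isLt]⟩
    · rintro ⟨j, hj, rfl⟩; exact ⟨⟨j, hj⟩, by simp [hαdef, hj]⟩
  have hAsimg : As = (Finset.range n).image β := by
    ext v
    simp only [hAs, Finset.mem_image, Finset.mem_univ, true_and, Finset.mem_range]
    constructor
    · rintro ⟨i, rfl⟩; exact ⟨i, i.isLt, by simp [hβdef, i.isLt]⟩
    · rintro ⟨j, hj, rfl⟩; exact ⟨⟨j, hj⟩, by simp [hβdef, hj]⟩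
  -- notation for prefixes
  set P : ℕ → Finset V := fun j => (Finset.range j).image α with hP
  set Q : ℕ → Finset V := fun j => (Finset.range j).image β with hQ
  -- basic facts about α, β for j < n
  have hαval : ∀ {j : ℕ} (hj : j < n), α j = a ⟨j, hj⟩ := fun {j} hj => by
    simp [hαdef, hj]
  have hβval : ∀ {j : ℕ} (hj : j < n), β j = astar ⟨j, hj⟩ := fun {j} hj => by
    simp [hβdef, hj]
  have hαmemA : ∀ {j : ℕ}, j < n → α j ∈ A := fun {j} hj => by
    rw [hαval hj]; exact Finset.mem_image_of_mem a (Finset.mem_univ _)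
  have hPsub : ∀ {j : ℕ}, j < n → P j ⊆ A.erase (α j) := by
    intro j hj v hv
    simp only [hP, Finset.mem_image, Finset.mem_range] at hv
    obtain ⟨i, hi, rfl⟩ := hv
    have hin : i < n := hi.trans hj
    refine Finset.mem_erase.mpr ⟨?_, hαmemA hin⟩
    rw [hαval hin, hαval hj]
    intro hcontra
    exact absurd (congrArg Fin.val (ha_inj hcontra)) (Nat.ne_of_lt hi)
  have hαnotmem : ∀ {j : ℕ}, j < n → α j ∉ As ∪ P j := by
    intro j hj hmem
    rcases Finset.mem_union.mp hmem with hm | hm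
    · simp only [hAs, Finset.mem_image, Finset.mem_univ, true_and] at hm
      obtain ⟨i, hi⟩ := hm
      exact hne ⟨j, hj⟩ i (by rw [← hαval hj, hi])
    · exact (Finset.mem_erase.mp (hPsub hj hm)).1 rfl
  -- the three telescoping identities
  have T1 : f (A ∪ As) = f A + ∑ j ∈ Finset.range n,
      (f (insert (β j) (A ∪ Q j)) - f (A ∪ Q j)) := by
    rw [hAsimg]; exact telescope_union f A β n
  have T2 : f (As ∪ A) = f As + ∑ j ∈ Finset.range n,
      (f (insert (α j) (As ∪ P j)) - f (As ∪ P j)) := by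
    rw [hAimg]; exact telescope_union f As α n
  have T3 : f A = ∑ j ∈ Finset.range n, (f (insert (α j) (P j)) - f (P j)) := by
    have := telescope_union f ∅ α n
    simpa [hnorm, hAimg] using this
  -- 1 - κ is nonnegative, and curvature bound
  have hinf : (1 : ℝ) - κ = Finset.univ.inf' Finset.univ_nonempty
      (fun v : V => (f Finset.univ - f (Finset.univ.erase v)) / f {v}) := by
    rw [hκ]; ring
  have hκle : (0:ℝ) ≤ 1 - κ := by
    rw [hinf]
    apply Finset.le_inf'
    intro v _
    exact div_nonneg (by linarith [hmono (Finset.erase_subset v Finset.univ)])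
      (hpos v).le
  have hcurv : ∀ v : V, (1 - κ) * f {v} ≤ f Finset.univ - f (Finset.univ.erase v) := by
    intro v
    have h1 : (1:ℝ) - κ ≤ (f Finset.univ - f (Finset.univ.erase v)) / f {v} := by
      rw [hinf]; exact Finset.inf'_le _ (Finset.mem_univ v)
    calc (1 - κ) * f {v} ≤ ((f Finset.univ - f (Finset.univ.erase v)) / f {v}) * f {v} :=
          mul_le_mul_of_nonneg_right h1 (hpos v).le
      _ = f Finset.univ - f (Finset.univ.erase v) := div_mul_cancel₀ _ (hpos v).ne'
  -- per-index inequalities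
  have key1 : ∀ j ∈ Finset.range n,
      f (insert (β j) (A ∪ Q j)) - f (A ∪ Q j)
        ≤ f (insert (α j) (P j)) - f (P j) := by
    intro j hjr
    have hj : j < n := Finset.mem_range.mp hjr
    have hsub1 : A.erase (α j) ⊆ A ∪ Q j :=
      (Finset.erase_subset _ _).trans Finset.subset_union_left
    have s1 : f (insert (β j) (A ∪ Q j)) - f (A ∪ Q j)
        ≤ f (insert (β j) (A.erase (α j))) - f (A.erase (α j)) := hsub _ hsub1
    have s2 : f (insert (β j) (A.erase (α j))) - f (A.erase (α j))
        ≤ f (insert (α j) (A.erase (α j))) - f (A.erase (α j)) := by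
      rw [hαval hj, hβval hj]; exact hbr ⟨j, hj⟩
    have s3 : f (insert (α j) (A.erase (α j))) - f (A.erase (α j))
        ≤ f (insert (α j) (P j)) - f (P j) := hsub _ (hPsub hj)
    linarith
  have key2 : ∀ j ∈ Finset.range n,
      (1 - κ) * (f (insert (α j) (P j)) - f (P j))
        ≤ f (insert (α j) (As ∪ P j)) - f (As ∪ P j) := by
    intro j hjr
    have hj : j < n := Finset.mem_range.mp hjr
    have hsubU : As ∪ P j ⊆ Finset.univ.erase (α j) := by
      intro v hv
      refine Finset.mem_erase.mpr ⟨?_, Finset.mem_univ v⟩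
      intro hcontra
      exact hαnotmem hj (hcontra ▸ hv)
    have s1 : f (insert (α j) (Finset.univ.erase (α j))) - f (Finset.univ.erase (α j))
        ≤ f (insert (α j) (As ∪ P j)) - f (As ∪ P j) := hsub _ hsubU
    have hins : insert (α j) (Finset.univ.erase (α j)) = Finset.univ :=
      Finset.insert_erase (Finset.mem_univ _)
    rw [hins] at s1
    have s2 : f (insert (α j) (P j)) - f (P j) ≤ f {α j} := by
      have := hsub (α j) (Finset.empty_subset (P j))
      simpa [hnorm] using this
    have s3 : (1 - κ) * (f (insert (α j) (P j)) - f (P j)) ≤ (1 - κ) * f {α j} :=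
      mul_le_mul_of_nonneg_left s2 hκle
    linarith [hcurv (α j)]
  -- combine
  have sum1 : ∑ j ∈ Finset.range n, (f (insert (β j) (A ∪ Q j)) - f (A ∪ Q j))
      ≤ ∑ j ∈ Finset.range n, (f (insert (α j) (P j)) - f (P j)) :=
    Finset.sum_le_sum key1
  have sum2 : ∑ j ∈ Finset.range n, (1 - κ) * (f (insert (α j) (P j)) - f (P j))
      ≤ ∑ j ∈ Finset.range n, (f (insert (α j) (As ∪ P j)) - f (As ∪ P j)) :=
    Finset.sum_le_sum key2
  rw [← Finset.mul_sum] at sum2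
  have hcomm : f (As ∪ A) = f (A ∪ As) := by rw [Finset.union_comm]
  -- f As = f(A ∪ As) - ∑ q ≤ f A + ∑ m - (1-κ) ∑ p ≤ f A + κ ∑ p = (1+κ) f A
  nlinarith [sum1, sum2, T1, T2, T3, hcomm]
end

section
/- Fully decentralized bound: Let f : 2^V → ℝ be a normalized, monotone, submodular set function with curvature κ_f ∈ [0,1). Suppose each agent i selects a_i satisfying f(a_i) ≥ f(a*_i) for its own action a*_i in an arbitrary comparison set A* = {a*_1,…,a*_n} (no coordination). Then f(A*) ≤ ∑_i f(a*_i) ≤ ∑_i f(a_i) ≤ (1/(1−κ_f)) f(A), i.e., f(A) ≥ (1−κ_f) f(A*), where A = {a_1,…,a_n}. -/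
/-!
Subadditivity bounds `f(A*)` by the sum of its singleton values, and the agents' choices
make that sum at most `∑ f({aᵢ})`. Conversely, adding the elements of `A` one at a time,
each marginal gain is at least the marginal gain at the top of the lattice, which by the
definition of the curvature is at least `(1 - κ) f({aᵢ})`; summing gives
`f(A) ≥ (1 - κ) ∑ f({aᵢ})`.
-/

open Finset

section SetFunction

variable {V : Type*} [DecidableEq V] {f : Finset V → ℝ}

theorem le_sum_singleton_of_subadditive (hnorm : f ∅ = 0)
    (hinsert : ∀ (B : Finset V) (s : V), f (insert s B) ≤ f {s} + f B) (S : Finset V) :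
    f S ≤ ∑ v ∈ S, f {v} := by
  induction S using Finset.induction with
  | empty => simp [hnorm]
  | insert v S hvS ih =>
    rw [sum_insert hvS]
    linarith [hinsert S v]

theorem mul_sum_singleton_le_of_marginal_univ [Fintype V] (hnorm : f ∅ = 0)
    (hsub : ∀ {A B : Finset V} (s : V), A ⊆ B → f (insert s B) - f B ≤ f (insert s A) - f A)
    {c : ℝ} (hmarg : ∀ v, c * f {v} ≤ f univ - f (univ.erase v)) (S : Finset V) :
    c * ∑ v ∈ S, f {v} ≤ f S := by
  induction S using Finset.induction with
  | empty => simp [hnorm]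
  | insert v S hvS ih =>
    have hS : S ⊆ univ.erase v := fun x hx =>
      mem_erase.2 ⟨ne_of_mem_of_not_mem hx hvS, mem_univ x⟩
    have hgain := hsub v hS
    rw [insert_erase (mem_univ v)] at hgain
    rw [sum_insert hvS, mul_add]
    linarith [hmarg v]

end SetFunction

theorem fully_decentralized_bound_general
    {V : Type*} [Fintype V] [Nonempty V] [DecidableEq V]
    (f : Finset V → ℝ)
    (hnorm : f ∅ = 0)
    (hsub : ∀ {A B : Finset V} (s : V), A ⊆ B →
      f (insert s B) - f B ≤ f (insert s A) - f A)
    (hpos : ∀ v : V, 0 < f {v})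
    (κ : ℝ)
    (hκ : κ = 1 - Finset.univ.inf' Finset.univ_nonempty
      (fun v : V => (f Finset.univ - f (Finset.univ.erase v)) / f {v}))
    (hκlt : κ < 1)
    (n : ℕ) (a astar : Fin n → V)
    (hainj : Function.Injective a) (hastarinj : Function.Injective astar)
    -- no coordination: each agent maximizes its own singleton value
    (hsel : ∀ i : Fin n, f {astar i} ≤ f {a i}) :
    f (Finset.univ.image astar) ≤ ∑ i, f {astar i}
    ∧ ∑ i, f {astar i} ≤ ∑ i, f {a i}
    ∧ ∑ i, f {a i} ≤ (1 / (1 - κ)) * f (Finset.univ.image a)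
    ∧ (1 - κ) * f (Finset.univ.image astar) ≤ f (Finset.univ.image a) := by
  have hsubadd : ∀ (B : Finset V) (s : V), f (insert s B) ≤ f {s} + f B := fun B s => by
    simpa [hnorm] using hsub s B.empty_subset
  have hmarg : ∀ v, (1 - κ) * f {v} ≤ f univ - f (univ.erase v) := fun v => by
    rw [← le_div_iff₀ (hpos v), hκ, sub_sub_cancel]
    exact inf'_le _ (mem_univ v)
  have hupper : f (univ.image astar) ≤ ∑ i, f {astar i} := by
    simpa only [sum_image hastarinj.injOn] using
      le_sum_singleton_of_subadditive hnorm hsubadd (univ.image astar)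
  have hchoice : ∑ i, f {astar i} ≤ ∑ i, f {a i} := sum_le_sum fun i _ => hsel i
  have hlower : (1 - κ) * ∑ i, f {a i} ≤ f (univ.image a) := by
    simpa only [sum_image hainj.injOn] using
      mul_sum_singleton_le_of_marginal_univ hnorm hsub hmarg (univ.image a)
  have hκpos : 0 < 1 - κ := sub_pos.2 hκlt
  refine ⟨hupper, hchoice, ?_, ?_⟩
  · rwa [one_div_mul_eq_div, le_div_iff₀' hκpos]
  · calc (1 - κ) * f (univ.image astar) ≤ (1 - κ) * ∑ i, f {a i} := by gcongr; linarith
      _ ≤ f (univ.image a) := hlower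

/-- Fully decentralized bound: if each agent independently
selects `a_i` with `f({a_i}) ≥ f({a*_i})`, then
`f(A*) ≤ ∑_i f({a*_i}) ≤ ∑_i f({a_i}) ≤ (1/(1-κ)) f(A)`, i.e.
`f(A) ≥ (1-κ) f(A*)`. -/
theorem fully_decentralized_bound
    {V : Type*} [Fintype V] [Nonempty V] [DecidableEq V]
    (f : Finset V → ℝ)
    (hnorm : f ∅ = 0)
    (hmono : ∀ {A B : Finset V}, A ⊆ B → f A ≤ f B)
    (hsub : ∀ {A B : Finset V} (s : V), A ⊆ B →
      f (insert s B) - f B ≤ f (insert s A) - f A)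
    (hpos : ∀ v : V, 0 < f {v})
    (κ : ℝ)
    (hκ : κ = 1 - Finset.univ.inf' Finset.univ_nonempty
      (fun v : V => (f Finset.univ - f (Finset.univ.erase v)) / f {v}))
    (hκlt : κ < 1)
    (n : ℕ) (a astar : Fin n → V)
    (hainj : Function.Injective a) (hastarinj : Function.Injective astar)
    -- no coordination: each agent maximizes its own singleton value
    (hsel : ∀ i : Fin n, f {astar i} ≤ f {a i}) :
    f (Finset.univ.image astar) ≤ ∑ i, f {astar i}
    ∧ ∑ i, f {astar i} ≤ ∑ i, f {a i}
    ∧ ∑ i, f {a i} ≤ (1 / (1 - κ)) * f (Finset.univ.image a)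
    ∧ (1 - κ) * f (Finset.univ.image astar) ≤ f (Finset.univ.image a) :=
  fully_decentralized_bound_general f hnorm hsub hpos κ hκ hκlt n a astar hainj hastarinj hsel
end
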